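/- arXiv:1307.1182 — 3 statements merged into one kernel-verified Lean document; each statement's English description precedes it below -/
import Mathlib

section
/- Let (X, d) be a compact metric space, let f : X → X be a homeomorphism satisfying the specification property, and let p ∈ X be a fixed point of f. Then for all ε_1 > 0, ε_2 > 0 and every x ∈ X, there exist a natural number L and a point w ∈ X such that d(x, w) ≤ ε_2 and d(f^{-n}(f^{-L}(w)), p) ≤ ε_1 for all n ≥ 0. In other words, the set ⋃_{L ≥ 0} f^L({y ∈ X : d(f^{-n}(y), p) ≤ ε_1 for all n ≥ 0}) is dense in X for every ε_1 > 0. -/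
open Filter Topology

/-- The specification property for a homeomorphism `f` of a metric space. -/
def SpecProp {X : Type*} [MetricSpace X] (f : X ≃ₜ X) : Prop :=
  ∀ ε : ℝ, 0 < ε → ∃ N : ℕ, 0 < N ∧
    ∀ (k : ℕ) (m n : ℕ → ℤ) (xs : ℕ → X),
      (∀ j < k, m j ≤ n j) →
      (∀ i < k, ∀ j < k, i ≠ j →
        ∀ a ∈ Set.Icc (m i) (n i), ∀ b ∈ Set.Icc (m j) (n j), (N : ℤ) ≤ |a - b|) →
      ∃ x : X, ∀ j < k, ∀ i ∈ Set.Icc (m j) (n j),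
        dist ((f.toEquiv ^ i) x) ((f.toEquiv ^ i) (xs j)) ≤ ε

/-! The specification property gives points `w_T` near `x` whose backward orbit shadows the fixed
point `p` on the time window `[-(T + N), -N]`. Since these are closed conditions and `X` is
compact, some point satisfies all of them at once; it lies near `x` and its `f^{-N}`-preimage lies
in the local unstable set of `p`. -/

namespace Homeomorph

variable {X : Type*} [TopologicalSpace X]

def toPermHom : (X ≃ₜ X) →* Equiv.Perm X where
  toFun := Homeomorph.toEquiv
  map_one' := rfl
  map_mul' _ _ := rfl

theorem continuous_toEquiv_zpow (f : X ≃ₜ X) (i : ℤ) : Continuous (f.toEquiv ^ i) := by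
  have h : (f ^ i).toEquiv = f.toEquiv ^ i := map_zpow toPermHom f i
  exact h ▸ (f ^ i).continuous

end Homeomorph

theorem SpecProp.exists_shadow_pair {X : Type*} [MetricSpace X] {f : X ≃ₜ X} (hf : SpecProp f)
    {ε : ℝ} (hε : 0 < ε) :
    ∃ N : ℕ, ∀ a b c d : ℤ, a ≤ b → c ≤ d → b + N ≤ c → ∀ y z : X, ∃ x : X,
      (∀ i ∈ Set.Icc a b, dist ((f.toEquiv ^ i) x) ((f.toEquiv ^ i) y) ≤ ε) ∧
      (∀ i ∈ Set.Icc c d, dist ((f.toEquiv ^ i) x) ((f.toEquiv ^ i) z) ≤ ε) := by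
  obtain ⟨N, -, hN⟩ := hf ε hε
  refine ⟨N, fun a b c d hab hcd hgap y z => ?_⟩
  obtain ⟨x, hx⟩ := hN 2 (fun j => if j = 0 then a else c) (fun j => if j = 0 then b else d)
    (fun j => if j = 0 then y else z)
    (by intro j hj; interval_cases j <;> simpa)
    (by
      intro i hi j hj hij s hs t ht
      interval_cases i <;> interval_cases j <;> simp at hij hs ht <;> rw [le_abs] <;> omega)
  exact ⟨x, fun i hi => by simpa using hx 0 (by norm_num) i (by simpa using hi),
    fun i hi => by simpa using hx 1 (by norm_num) i (by simpa using hi)⟩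

theorem exists_forall_of_forall_exists_forall_le {X : Type*} [TopologicalSpace X]
    [CompactSpace X] {P : ℕ → X → Prop} (hP : ∀ n, IsClosed {x | P n x})
    (h : ∀ T, ∃ x, ∀ n ≤ T, P n x) : ∃ x, ∀ n, P n x := by
  let K : ℕ → Set X := fun T => ⋂ n ∈ Set.Iic T, {x | P n x}
  have hK : ∀ T, IsClosed (K T) := fun T => isClosed_biInter fun n _ => hP n
  obtain ⟨x, hx⟩ := IsCompact.nonempty_iInter_of_sequence_nonempty_isCompact_isClosed K
    (fun T => Set.biInter_subset_biInter_left (Set.Iic_subset_Iic.2 T.le_succ))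
    (fun T => by simpa [K] using h T) (hK 0).isCompact hK
  exact ⟨x, fun n => Set.mem_iInter₂.1 (Set.mem_iInter.1 hx n) n Set.self_mem_Iic⟩

/-- if a homeomorphism of a compact metric space satisfies the specification
property and `p` is a fixed point, then the union over `L ≥ 0` of the `f^L`-images of the
local unstable set of `p` of size `ε₁` is dense: every point `x` is `ε₂`-approximated by
some such `w`. -/
theorem dense_unstable_set_of_fixedPoint {X : Type*} [MetricSpace X] [CompactSpace X]
    (f : X ≃ₜ X) (hf : SpecProp f) (p : X) (hp : f p = p) :
    ∀ ε₁ ε₂ : ℝ, 0 < ε₁ → 0 < ε₂ → ∀ x : X,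
      ∃ (L : ℕ) (w : X), dist x w ≤ ε₂ ∧
        ∀ n : ℕ, dist ((f.toEquiv ^ (-(n : ℤ))) ((f.toEquiv ^ (-(L : ℤ))) w)) p ≤ ε₁ := by
  intro ε₁ ε₂ hε₁ hε₂ x
  set δ := min ε₁ ε₂
  obtain ⟨N, hN⟩ := hf.exists_shadow_pair (lt_min hε₁ hε₂ : 0 < δ)
  have hwindow : ∀ T : ℕ, ∃ w, ∀ n ≤ T, dist x w ≤ δ ∧
      dist ((f.toEquiv ^ (-(n : ℤ))) ((f.toEquiv ^ (-(N : ℤ))) w)) p ≤ δ := by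
    intro T
    obtain ⟨w, hwp, hwx⟩ := hN (-(T + N : ℤ)) (-N) 0 0 (by omega) le_rfl (by omega) p x
    have hxw : dist x w ≤ δ := by
      simpa only [zpow_zero, Equiv.Perm.one_apply, dist_comm] using hwx 0 ⟨le_rfl, le_rfl⟩
    refine ⟨w, fun n hn => ⟨hxw, ?_⟩⟩
    have hpfix : (f.toEquiv ^ (-(n : ℤ) + -(N : ℤ))) p = p :=
      Function.IsFixedPt.perm_zpow hp _
    rw [← Equiv.Perm.mul_apply, ← zpow_add]
    simpa only [hpfix] using hwp (-(n : ℤ) + -(N : ℤ)) ⟨by omega, by omega⟩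
  have hclosed : ∀ n : ℕ, IsClosed {w | dist x w ≤ δ ∧
      dist ((f.toEquiv ^ (-(n : ℤ))) ((f.toEquiv ^ (-(N : ℤ))) w)) p ≤ δ} := fun n =>
    (isClosed_le (continuous_const.dist continuous_id) continuous_const).inter <|
      isClosed_le (((f.continuous_toEquiv_zpow _).comp (f.continuous_toEquiv_zpow _)).dist
        continuous_const) continuous_const
  obtain ⟨w, hw⟩ := exists_forall_of_forall_exists_forall_le hclosed hwindow
  exact ⟨N, w, (hw 0).1.trans (min_le_right _ _), fun n => (hw n).2.trans (min_le_left _ _)⟩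
end

section
/- Let (X, d) be a compact metric space, let f : X → X be a homeomorphism satisfying the specification property, and let q ∈ X be a fixed point of f. Then for all ε_1 > 0, ε_2 > 0 and every x ∈ X, there exist a natural number L and a point w ∈ X such that d(x, w) ≤ ε_2 and d(f^{n}(f^{L}(w)), q) ≤ ε_1 for all n ≥ 0. In other words, the set ⋃_{L ≥ 0} f^{-L}({y ∈ X : d(f^{n}(y), q) ≤ ε_1 for all n ≥ 0}) is dense in X for every ε_1 > 0. -/
/-!
Specification glues the time-`0` position of `x` to the orbit of `q` on `[N, N + T]`, giving
for every `T` a point near `x` whose orbit stays near `q` on that window. Since these are closed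
conditions, compactness yields one point `w` near `x` with `f^(N + n) w` near `q` for all `n ≥ 0`.
-/

open Filter Topology

open Set

theorem Homeomorph.continuous_toEquiv_zpow_s2 {X : Type*} [TopologicalSpace X] (f : X ≃ₜ X)
    (i : ℤ) : Continuous ⇑(f.toEquiv ^ i) := by
  let toPerm : (X ≃ₜ X) →* Equiv.Perm X := ⟨⟨Homeomorph.toEquiv, rfl⟩, fun _ _ ↦ rfl⟩
  have : (f ^ i).toEquiv = f.toEquiv ^ i := map_zpow toPerm f i
  rw [← this]
  exact (f ^ i).continuous

theorem IsCompact.exists_forall_mem_of_forall_exists_forall_le_mem {X Y : Type*}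
    [TopologicalSpace X] [TopologicalSpace Y] {A : Set X} (hA : IsCompact A) {C : Set Y}
    (hC : IsClosed C) {g : ℕ → X → Y} (hg : ∀ n, Continuous (g n))
    (h : ∀ T, ∃ u ∈ A, ∀ n ≤ T, g n u ∈ C) : ∃ u ∈ A, ∀ n, g n u ∈ C := by
  have hne : (A ∩ ⋂ n, g n ⁻¹' C).Nonempty := by
    refine hA.inter_iInter_nonempty _ (fun n ↦ hC.preimage (hg n)) fun s ↦ ?_
    obtain ⟨u, huA, hu⟩ := h (s.sup id)
    exact ⟨u, huA, mem_iInter₂.2 fun n hn ↦ hu n (Finset.le_sup (f := id) hn)⟩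
  obtain ⟨u, huA, hu⟩ := hne
  exact ⟨u, huA, mem_iInter.1 hu⟩

theorem SpecProp.exists_shadow_point_and_segment {X : Type*} [MetricSpace X] {f : X ≃ₜ X}
    (hf : SpecProp f) {ε : ℝ} (hε : 0 < ε) :
    ∃ N : ℕ, ∀ (x y : X) (T : ℕ), ∃ u : X, dist u x ≤ ε ∧
      ∀ i ∈ Icc (N : ℤ) (N + T), dist ((f.toEquiv ^ i) u) ((f.toEquiv ^ i) y) ≤ ε := by
  obtain ⟨N, -, hspec⟩ := hf ε hε
  refine ⟨N, fun x y T ↦ ?_⟩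
  let m : ℕ → ℤ := fun j ↦ if j = 0 then 0 else N
  let n : ℕ → ℤ := fun j ↦ if j = 0 then 0 else N + T
  have hmn : ∀ j < 2, m j ≤ n j := by
    intro j _
    by_cases hj : j = 0 <;> simp [m, n, hj]
  have hsep : ∀ i < 2, ∀ j < 2, i ≠ j →
      ∀ a ∈ Icc (m i) (n i), ∀ b ∈ Icc (m j) (n j), (N : ℤ) ≤ |a - b| := by
    intro i hi j hj hij a ha b hb
    simp only [mem_Icc] at ha hb
    interval_cases i <;> interval_cases j
    all_goals first
      | exact absurd rfl hij
      | (simp only [m, n, one_ne_zero, if_true, if_false] at ha hb; rw [le_abs]; omega)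
  obtain ⟨u, hu⟩ := hspec 2 m n (fun j ↦ if j = 0 then x else y) hmn hsep
  refine ⟨u, by simpa using hu 0 two_pos 0 (by simp [m, n]), fun i hi ↦ ?_⟩
  simpa using hu 1 one_lt_two i (by simpa [m, n] using hi)

/-- if a homeomorphism of a compact metric space satisfies the specification
property and `q` is a fixed point, then the union over `L ≥ 0` of the `f^{-L}`-images of the
local stable set of `q` of size `ε₁` is dense: every point `x` is `ε₂`-approximated by
some such `w`. -/
theorem dense_stable_set_of_fixedPoint {X : Type*} [MetricSpace X] [CompactSpace X]
    (f : X ≃ₜ X) (hf : SpecProp f) (q : X) (hq : f q = q) :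
    ∀ ε₁ ε₂ : ℝ, 0 < ε₁ → 0 < ε₂ → ∀ x : X,
      ∃ (L : ℕ) (w : X), dist x w ≤ ε₂ ∧
        ∀ n : ℕ, dist ((f.toEquiv ^ (n : ℤ)) ((f.toEquiv ^ (L : ℤ)) w)) q ≤ ε₁ := by
  intro ε₁ ε₂ hε₁ hε₂ x
  obtain ⟨N, hshadow⟩ := hf.exists_shadow_point_and_segment (lt_min hε₁ hε₂)
  let g : ℕ → X → X := fun n w ↦ (f.toEquiv ^ (n : ℤ)) ((f.toEquiv ^ (N : ℤ)) w)
  have hg : ∀ n, Continuous (g n) := fun n ↦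
    (f.continuous_toEquiv_zpow_s2 n).comp (f.continuous_toEquiv_zpow_s2 N)
  have hwindow : ∀ T, ∃ u ∈ Metric.closedBall x ε₂, ∀ n ≤ T, g n u ∈ Metric.closedBall q ε₁ := by
    intro T
    obtain ⟨u, hux, hu⟩ := hshadow x q T
    refine ⟨u, hux.trans (min_le_right _ _), fun n hn ↦ ?_⟩
    have hgn : g n u = (f.toEquiv ^ ((N + n : ℕ) : ℤ)) u := by
      simp only [g, ← Equiv.Perm.mul_apply, ← zpow_add, Nat.cast_add, add_comm]
    have hclose := hu ((N + n : ℕ) : ℤ) ⟨by omega, by omega⟩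
    rw [Equiv.Perm.zpow_apply_eq_self_of_apply_eq_self hq] at hclose
    rw [Metric.mem_closedBall, hgn]
    exact hclose.trans (min_le_left _ _)
  obtain ⟨w, hwx, hw⟩ :=
    Metric.isClosed_closedBall.isCompact.exists_forall_mem_of_forall_exists_forall_le_mem
      Metric.isClosed_closedBall hg hwindow
  exact ⟨N, w, by rwa [dist_comm], hw⟩
end

section
/- Let (X, d) be a compact metric space, let f : X → X be a homeomorphism satisfying the specification property, and let q ∈ X be a periodic point of f. Suppose there exists ε_1 > 0 such that every point y ∈ X with d(f^{n}(y), f^{n}(q)) ≤ ε_1 for all n ≥ 0 satisfies d(f^{n}(y), f^{n}(q)) → 0 as n → ∞ (i.e., the local stable set of q of size ε_1 is contained in the stable set of q). Then the stable set W^s(q) = {y ∈ X : d(f^{n}(y), f^{n}(q)) → 0 as n → ∞} is dense in X. -/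
/-!
Fix `x` and `r > 0`, and let `δ = min r ε₁ / 2`. By specification, for every `t` some point is
`δ`-close to `x` and `δ`-shadows the orbit of `q` during the times `[N, N + t]`; by compactness
some point `a` does so during all times `n ≥ N`. If `k` is a period of `q`, then `f^[k N] a` lies
in the local stable set of `f^[k N] q = q`, hence in its stable set, and so does `a`.
-/

open Filter Topology

theorem Homeomorph.toEquiv_zpow_natCast_apply {X : Type*} [TopologicalSpace X] (f : X ≃ₜ X)
    (n : ℕ) (x : X) : (f.toEquiv ^ (n : ℤ)) x = (⇑f)^[n] x := by
  rw [zpow_natCast, Equiv.Perm.coe_pow, Homeomorph.coe_toEquiv]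

theorem SpecProp.exists_dist_le_forall_Icc_dist_iterate_le {X : Type*} [MetricSpace X]
    {f : X ≃ₜ X} (hf : SpecProp f) {ε : ℝ} (hε : 0 < ε) :
    ∃ N : ℕ, ∀ (x q : X) (t : ℕ), ∃ y, dist y x ≤ ε ∧
      ∀ n ∈ Set.Icc N (N + t), dist ((⇑f)^[n] y) ((⇑f)^[n] q) ≤ ε := by
  obtain ⟨N, -, hspec⟩ := hf ε hε
  refine ⟨N, fun x q t => ?_⟩
  obtain ⟨y, hy⟩ := hspec 2 (fun j => if j = 0 then 0 else (N : ℤ))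
    (fun j => if j = 0 then 0 else (N : ℤ) + t) (fun j => if j = 0 then x else q)
    (fun j _ => by split_ifs <;> omega)
    (fun i hi j hj hij a ha b hb => by
      rw [Set.mem_Icc] at ha hb
      rw [le_abs]
      interval_cases i <;> interval_cases j <;> simp at ha hb hij ⊢ <;> omega)
  refine ⟨y, by simpa using hy 0 (by norm_num) 0 (by simp), fun n hn => ?_⟩
  rw [← Homeomorph.toEquiv_zpow_natCast_apply, ← Homeomorph.toEquiv_zpow_natCast_apply]
  simpa using hy 1 (by norm_num) n ⟨by simpa using hn.1, by exact_mod_cast hn.2⟩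

theorem exists_dist_le_forall_ge_dist_iterate_le {X : Type*} [PseudoMetricSpace X]
    [CompactSpace X] {g : X → X} (hg : Continuous g) {x q : X} {δ : ℝ} {N : ℕ}
    (h : ∀ t : ℕ, ∃ y, dist y x ≤ δ ∧
      ∀ n ∈ Set.Icc N (N + t), dist (g^[n] y) (g^[n] q) ≤ δ) :
    ∃ a, dist a x ≤ δ ∧ ∀ n, N ≤ n → dist (g^[n] a) (g^[n] q) ≤ δ := by
  let K : ℕ → Set X := fun t =>
    Metric.closedBall x δ ∩ ⋂ n ∈ Set.Icc N (N + t), {y | dist (g^[n] y) (g^[n] q) ≤ δ}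
  have hK_anti : ∀ t, K (t + 1) ⊆ K t := fun t =>
    Set.inter_subset_inter_right _ <| Set.biInter_subset_biInter_left <|
      Set.Icc_subset_Icc_right (by omega)
  have hK_closed : ∀ t, IsClosed (K t) := fun t =>
    Metric.isClosed_closedBall.inter <| isClosed_biInter fun n _ =>
      isClosed_le ((hg.iterate n).dist continuous_const) continuous_const
  have hK_ne : ∀ t, (K t).Nonempty := fun t => by
    obtain ⟨y, hyx, hy⟩ := h t
    exact ⟨y, hyx, Set.mem_iInter₂.2 hy⟩
  obtain ⟨a, ha⟩ := IsCompact.nonempty_iInter_of_sequence_nonempty_isCompact_isClosed K hK_anti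
    hK_ne (hK_closed 0).isCompact hK_closed
  rw [Set.mem_iInter] at ha
  exact ⟨a, (ha 0).1, fun n hn => Set.mem_iInter₂.1 (ha n).2 n ⟨hn, by omega⟩⟩

theorem dist_iterate_iterate_of_isFixedPt {X : Type*} [PseudoMetricSpace X] {g : X → X}
    {q : X} {L : ℕ} (hq : Function.IsFixedPt g^[L] q) (a : X) (n : ℕ) :
    dist (g^[n] (g^[L] a)) (g^[n] q) = dist (g^[n + L] a) (g^[n + L] q) := by
  rw [Function.iterate_add_apply, Function.iterate_add_apply, hq.eq]

theorem tendsto_dist_iterate_of_iterate_of_isFixedPt {X : Type*} [PseudoMetricSpace X]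
    {g : X → X} {q : X} {L : ℕ} (hq : Function.IsFixedPt g^[L] q) {a : X}
    (h : Tendsto (fun n => dist (g^[n] (g^[L] a)) (g^[n] q)) atTop (𝓝 0)) :
    Tendsto (fun n => dist (g^[n] a) (g^[n] q)) atTop (𝓝 0) := by
  rw [← tendsto_add_atTop_iff_nat L]
  simpa only [dist_iterate_iterate_of_isFixedPt hq] using h

/-- if `f` satisfies the specification property, `q` is a periodic point, and
some local stable set of `q` is contained in the stable set of `q`, then the stable set
`W^s(q) = {y : d(f^{n} y, f^{n} q) → 0}` is dense in `X`. -/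
theorem dense_stable_manifold_of_periodic {X : Type*} [MetricSpace X] [CompactSpace X]
    (f : X ≃ₜ X) (hf : SpecProp f) (q : X)
    (hper : ∃ k : ℕ, 1 ≤ k ∧ (f.toEquiv ^ (k : ℤ)) q = q)
    (hloc : ∃ ε₁ : ℝ, 0 < ε₁ ∧ ∀ y : X,
      (∀ n : ℕ, dist ((f.toEquiv ^ (n : ℤ)) y) ((f.toEquiv ^ (n : ℤ)) q) ≤ ε₁) →
      Tendsto (fun n : ℕ => dist ((f.toEquiv ^ (n : ℤ)) y) ((f.toEquiv ^ (n : ℤ)) q))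
        atTop (nhds 0)) :
    Dense {y : X |
      Tendsto (fun n : ℕ => dist ((f.toEquiv ^ (n : ℤ)) y) ((f.toEquiv ^ (n : ℤ)) q))
        atTop (nhds 0)} := by
  obtain ⟨k, hk, hkq⟩ := hper
  obtain ⟨ε₁, hε₁, hstab⟩ := hloc
  simp only [Homeomorph.toEquiv_zpow_natCast_apply] at hkq hstab ⊢
  refine Metric.dense_iff.2 fun x r hr => ?_
  obtain ⟨N, hN⟩ :=
    hf.exists_dist_le_forall_Icc_dist_iterate_le (ε := min r ε₁ / 2) (by positivity)
  obtain ⟨a, hax, ha⟩ := exists_dist_le_forall_ge_dist_iterate_le f.continuous (hN x q)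
  have hq : Function.IsFixedPt f^[k * N] q := (Function.IsPeriodicPt.mul_const hkq N).eq
  refine ⟨a, by simp only [Metric.mem_ball]; linarith [min_le_left r ε₁],
    tendsto_dist_iterate_of_iterate_of_isFixedPt hq (hstab _ fun n => ?_)⟩
  rw [dist_iterate_iterate_of_isFixedPt hq]
  linarith [ha (n + k * N) (by nlinarith), min_le_right r ε₁]
end
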